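/- arXiv:0805.0706 — 3 statements merged into one kernel-verified Lean document; each statement's English description precedes it below -/
import Mathlib

section
/- Define C_n = \inf\{\mathcal{E}_0(f,f) : f \in L^2(B_n), f(0) = 1\}. Then the principal eigenvalue with a = 0 satisfies \lambda_n^{\circ} \ge C_{2n} / \sum_{x \in B_n} \tau_x. -/
open Classical

noncomputable section

/-- Nearest-neighbour adjacency on `ℤ^d` (ℓ¹ distance one). -/
def Adj {d : ℕ} (x y : Fin d → ℤ) : Prop := (∑ i, |x i - y i|) = 1

/-- The box `B_n = {-n,…,n}^d` as a set. -/
def boxS (d n : ℕ) : Set (Fin d → ℤ) := {x | ∀ i, |x i| ≤ (n : ℤ)}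

/-- The box `B_n = {-n,…,n}^d` as a finset. -/
def boxF (d n : ℕ) : Finset (Fin d → ℤ) :=
  Finset.Icc (fun _ => -(n : ℤ)) (fun _ => (n : ℤ))

/-- Dirichlet form with `a = 0`: `ℰ₀(f,f) = (1/2) ∑_{x∼y} (f(y)-f(x))²`. -/
def dirForm0 {d : ℕ} (f : (Fin d → ℤ) → ℝ) : ℝ :=
  (1/2) * ∑ᶠ p : (Fin d → ℤ) × (Fin d → ℤ),
    if Adj p.1 p.2 then (f p.2 - f p.1)^2 else 0

/-- Weighted norm `(f,f) = ∑_x f(x)² τ_x`. -/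
def wNorm {d : ℕ} (τ : (Fin d → ℤ) → ℝ) (f : (Fin d → ℤ) → ℝ) : ℝ :=
  ∑ᶠ x, f x ^ 2 * τ x

/-- The principal Dirichlet eigenvalue `λ_n°` (case `a = 0`). -/
def eig0 (d : ℕ) (τ : (Fin d → ℤ) → ℝ) (n : ℕ) : ℝ :=
  sInf {r | ∃ f : (Fin d → ℤ) → ℝ,
    (∀ x ∉ boxS d n, f x = 0) ∧ f ≠ 0 ∧ r = dirForm0 f / wNorm τ f}

/-- Effective conductance `C_n = inf {ℰ₀(f,f) : f ∈ L²(B_n), f(0)=1}`. -/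
def effCond (d n : ℕ) : ℝ :=
  sInf {r | ∃ f : (Fin d → ℤ) → ℝ,
    (∀ x ∉ boxS d n, f x = 0) ∧ f 0 = 1 ∧ r = dirForm0 f}

/-!
Let `f` vanish outside `B_n` and let `x₀ ∈ B_n` maximise `|f|`. The recentred, normalised
function `x ↦ f (x + x₀) / f x₀` vanishes outside `B_{2n}` and equals `1` at the origin, and
the Dirichlet form is translation invariant, so `ℰ₀(f,f) ≥ C_{2n} f(x₀)²`. On the other
hand `∑ f² τ ≤ f(x₀)² ∑_{B_n} τ`.
-/

lemma mem_boxF_iff {d n : ℕ} {x : Fin d → ℤ} : x ∈ boxF d n ↔ x ∈ boxS d n := by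
  simp only [boxF, Finset.mem_Icc, Pi.le_def, boxS, Set.mem_ofPred_eq, abs_le, ← forall_and]

lemma sub_mem_boxS {d m n : ℕ} {x y : Fin d → ℤ} (hx : x ∈ boxS d m) (hy : y ∈ boxS d n) :
    x - y ∈ boxS d (m + n) := fun i => by
  have := abs_sub (x i) (y i)
  have := hx i
  have := hy i
  simp only [Pi.sub_apply, Nat.cast_add]
  linarith

lemma adj_add_right_iff {d : ℕ} (x y v : Fin d → ℤ) : Adj (x + v) (y + v) ↔ Adj x y := by
  simp only [Adj, Pi.add_apply, add_sub_add_right_eq_sub]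

lemma dirForm0_nonneg {d : ℕ} (f : (Fin d → ℤ) → ℝ) : 0 ≤ dirForm0 f :=
  mul_nonneg (by norm_num) <| finsum_nonneg fun _ => by split_ifs <;> positivity

lemma dirForm0_comp_add_right {d : ℕ} (f : (Fin d → ℤ) → ℝ) (v : Fin d → ℤ) :
    dirForm0 (fun x => f (x + v)) = dirForm0 f := by
  unfold dirForm0
  congr 1
  refine (finsum_congr fun p : (Fin d → ℤ) × (Fin d → ℤ) =>
    if_congr (adj_add_right_iff p.1 p.2 v).symm rfl rfl).trans ?_
  exact finsum_comp_equiv ((Equiv.addRight v).prodCongr (Equiv.addRight v))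
    (f := fun p : (Fin d → ℤ) × (Fin d → ℤ) =>
      if Adj p.1 p.2 then (f p.2 - f p.1) ^ 2 else 0)

lemma dirForm0_const_mul {d : ℕ} (f : (Fin d → ℤ) → ℝ) (c : ℝ) :
    dirForm0 (fun x => c * f x) = c ^ 2 * dirForm0 f := by
  have h (p : (Fin d → ℤ) × (Fin d → ℤ)) :
      (if Adj p.1 p.2 then (c * f p.2 - c * f p.1) ^ 2 else 0) =
        c ^ 2 * if Adj p.1 p.2 then (f p.2 - f p.1) ^ 2 else 0 := by
    split_ifs <;> ring
  rw [dirForm0, dirForm0, finsum_congr h, ← mul_finsum]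
  ring

lemma wNorm_eq_sum {d n : ℕ} (τ : (Fin d → ℤ) → ℝ) {f : (Fin d → ℤ) → ℝ}
    (hf : ∀ x ∉ boxS d n, f x = 0) :
    wNorm τ f = ∑ x ∈ boxF d n, f x ^ 2 * τ x := by
  refine finsum_eq_sum_of_support_subset _ fun x hx => ?_
  rw [Finset.mem_coe, mem_boxF_iff]
  by_contra h
  rw [Function.mem_support, hf x h] at hx
  exact hx (by ring)

lemma effCond_le_dirForm0 {d m : ℕ} {f : (Fin d → ℤ) → ℝ} (hf : ∀ x ∉ boxS d m, f x = 0)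
    (hf0 : f 0 = 1) : effCond d m ≤ dirForm0 f :=
  csInf_le ⟨0, by rintro r ⟨g, -, -, rfl⟩; exact dirForm0_nonneg g⟩
    ⟨f, hf, hf0, rfl⟩

lemma effCond_mul_sq_le_dirForm0 {d m n : ℕ} {f : (Fin d → ℤ) → ℝ}
    (hf : ∀ x ∉ boxS d m, f x = 0) {x₀ : Fin d → ℤ} (hx₀ : x₀ ∈ boxS d n) (hfx₀ : f x₀ ≠ 0) :
    effCond d (m + n) * f x₀ ^ 2 ≤ dirForm0 f := by
  set g : (Fin d → ℤ) → ℝ := fun x => (f x₀)⁻¹ * f (x + x₀)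
  have hg : ∀ x ∉ boxS d (m + n), g x = 0 := fun x hx => by
    have : x + x₀ ∉ boxS d m := fun h => hx (by simpa using sub_mem_boxS h hx₀)
    simp [g, hf _ this]
  have hg0 : g 0 = 1 := by simp [g, hfx₀]
  have hg_dir : dirForm0 g = (f x₀ ^ 2)⁻¹ * dirForm0 f := by
    rw [dirForm0_const_mul (fun x => f (x + x₀)), dirForm0_comp_add_right, inv_pow]
  rw [← le_div_iff₀ (by positivity), div_eq_inv_mul, ← hg_dir]
  exact effCond_le_dirForm0 hg hg0

lemma effCond_div_sum_le_dirForm0_div_wNorm {d n : ℕ} {τ : (Fin d → ℤ) → ℝ} (hτ : ∀ x, 0 < τ x)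
    {f : (Fin d → ℤ) → ℝ} (hf : ∀ x ∉ boxS d n, f x = 0) (hf0 : f ≠ 0) :
    effCond d (2 * n) / ∑ x ∈ boxF d n, τ x ≤ dirForm0 f / wNorm τ f := by
  obtain ⟨y, hy⟩ := Function.ne_iff.1 hf0
  have hy_box : y ∈ boxF d n := mem_boxF_iff.2 <| by_contra fun h => hy (hf y h)
  obtain ⟨x₀, hx₀, hmax⟩ :=
    (boxF d n).exists_max_image (fun x => f x ^ 2) ⟨y, hy_box⟩
  have hfx₀ : f x₀ ≠ 0 := sq_pos_iff.1 ((sq_pos_of_ne_zero hy).trans_le (hmax y hy_box))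
  have hw_pos : 0 < wNorm τ f := by
    rw [wNorm_eq_sum τ hf]
    exact Finset.sum_pos' (fun x _ => mul_nonneg (sq_nonneg _) (hτ x).le)
      ⟨y, hy_box, mul_pos (sq_pos_of_ne_zero hy) (hτ y)⟩
  have hw_le : wNorm τ f ≤ (∑ x ∈ boxF d n, τ x) * f x₀ ^ 2 := by
    rw [wNorm_eq_sum τ hf, Finset.sum_mul]
    exact Finset.sum_le_sum fun x hx => by
      rw [mul_comm]
      exact mul_le_mul_of_nonneg_left (hmax x hx) (hτ x).le
  have hE : effCond d (2 * n) * f x₀ ^ 2 ≤ dirForm0 f :=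
    two_mul n ▸ effCond_mul_sq_le_dirForm0 hf (mem_boxF_iff.1 hx₀) hfx₀
  calc effCond d (2 * n) / ∑ x ∈ boxF d n, τ x
      = effCond d (2 * n) * f x₀ ^ 2 / ((∑ x ∈ boxF d n, τ x) * f x₀ ^ 2) :=
        (mul_div_mul_right _ _ (pow_ne_zero 2 hfx₀)).symm
    _ ≤ dirForm0 f / wNorm τ f := div_le_div₀ (dirForm0_nonneg f) hE hw_pos hw_le

theorem eig0_ge_cond_general (d : ℕ) (τ : (Fin d → ℤ) → ℝ)
    (hτ : ∀ x, 0 < τ x) (n : ℕ) :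
    eig0 d τ n ≥ effCond d (2*n) / ∑ x ∈ boxF d n, τ x := by
  let δ : (Fin d → ℤ) → ℝ := fun x => if x = 0 then 1 else 0
  have hδ : ∀ x ∉ boxS d n, δ x = 0 := fun x hx =>
    if_neg (by rintro rfl; exact hx fun i => by simp)
  refine le_csInf ⟨_, δ, hδ, Function.ne_iff.2 ⟨0, by simp [δ]⟩, rfl⟩ ?_
  rintro r ⟨f, hf, hf0, rfl⟩
  exact effCond_div_sum_le_dirForm0_div_wNorm hτ hf hf0

/-- `λ_n° ≥ C_{2n} / ∑_{x ∈ B_n} τ_x`. -/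
theorem eig0_ge_cond (d : ℕ) (hd : 1 ≤ d) (τ : (Fin d → ℤ) → ℝ)
    (hτ : ∀ x, 0 < τ x) (n : ℕ) :
    eig0 d τ n ≥ effCond d (2*n) / ∑ x ∈ boxF d n, τ x :=
  eig0_ge_cond_general d τ hτ n
end
end

section
/- Let (Z_x)_{x \in B} be independent centred real random variables indexed by a finite set B, and let (g_x)_{x \in B} be nonnegative reals. Then for every integer m \ge 1, \mathbb{E}[(\sum_{x\in B} g_x Z_x)^{2m}] \le C(m) \sum_{k=1}^{m} \sum_{e_1+\dots+e_k = 2m, e_i \ge 2} \prod_{i=1}^{k} (\sum_{x \in B} g_x^{e_i} \sup_{y \in B}|\mathbb{E}[Z_y^{e_i}]|), where C(m) depends only on m. -/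
/-!
Expanding the power by the multinomial theorem and integrating term by term, independence turns
the moment of each monomial `∏ₓ Z_x ^ {d_x}` into `∏ₓ E[Z_x ^ {d_x}]`, and centring kills every
monomial in which some `Z_x` occurs exactly once. A surviving exponent vector `d` has support of
size `k` with all multiplicities `≥ 2`, so `2k ≤ 2m`; listing its support as `f : Fin k → B` with
multiplicities `e = d ∘ f` codes `d` injectively as a term of the right-hand side, once the
products of sums there are expanded over `f`. The multinomial coefficients are at most `(2m)!`.
-/

open Classical MeasureTheory ProbabilityTheory Finset

noncomputable section

@[to_additive]
lemma Finset.prod_equivFin_symm {ι M : Type*} [CommMonoid M] (s : Finset ι) (F : ι → M) :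
    ∏ i, F (s.equivFin.symm i) = ∏ x ∈ s, F x := by
  rw [Equiv.prod_comp s.equivFin.symm (fun x : s ↦ F x), prod_coe_sort]

lemma Finset.le_of_mem_piAntidiag {ι : Type*} {s : Finset ι} {n : ℕ} {d : ι → ℕ}
    (hd : d ∈ s.piAntidiag n) {x : ι} (hx : x ∈ s) : d x ≤ n := by
  rw [mem_piAntidiag] at hd
  exact hd.1 ▸ single_le_sum (fun _ _ ↦ Nat.zero_le _) hx

lemma Nat.multinomial_le_factorial_sum {α : Type*} (s : Finset α) (f : α → ℕ) :
    Nat.multinomial s f ≤ (∑ i ∈ s, f i).factorial :=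
  Nat.le_of_dvd (Nat.factorial_pos _) ⟨_, by rw [← Nat.multinomial_spec, mul_comm]⟩

lemma Finset.le_ciSup₂_of_mem {ι : Type*} {s : Finset ι} {f : ι → ℝ} {x : ι} (hx : x ∈ s) :
    f x ≤ ⨆ y ∈ s, f y :=
  le_ciSup₂ (f := fun y (_ : y ∈ s) ↦ f y) ((s.finite_toSet.image f).bddAbove.mono (by
    rintro _ ⟨_, ⟨y, rfl⟩, ⟨hy, rfl⟩⟩; exact ⟨y, hy, rfl⟩)) x hx

namespace ProbabilityTheory

variable {Ω ι : Type*} {mΩ : MeasurableSpace Ω} {μ : Measure Ω} {X : ι → Ω → ℝ}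

lemma iIndepFun.integrable_finsetProd (hX : iIndepFun X μ)
    (hXm : ∀ i, AEStronglyMeasurable (X i) μ) {s : Finset ι} (hs : ∀ i ∈ s, Integrable (X i) μ) :
    Integrable (fun ω ↦ ∏ i ∈ s, X i ω) μ := by
  induction s using Finset.cons_induction with
  | empty => have := hX.isProbabilityMeasure; simp
  | cons a s ha ih =>
    have hindep := hX.indepFun_finsetProd_of_notMem₀ (fun i ↦ (hXm i).aemeasurable) ha
    have hprod : Integrable (∏ j ∈ s, X j) μ := by
      simpa only [← Finset.prod_fn] using ih fun i hi ↦ hs i (by simp [hi])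
    convert hindep.symm.integrable_mul (hs a (by simp)) hprod using 1
    ext ω
    simp only [Finset.prod_cons, Finset.prod_apply, Pi.mul_apply]

lemma iIndepFun.integral_finsetProd (hX : iIndepFun X μ)
    (hXm : ∀ i, AEStronglyMeasurable (X i) μ) (s : Finset ι) :
    ∫ ω, ∏ i ∈ s, X i ω ∂μ = ∏ i ∈ s, ∫ ω, X i ω ∂μ := by
  simp_rw [← Finset.prod_coe_sort s]
  exact (hX.precomp Subtype.val_injective).integral_fun_prod_eq_prod_integral fun i ↦ hXm i

lemma iIndepFun.integral_sum_mul_pow (hX : iIndepFun X μ) (hXm : ∀ i, Measurable (X i))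
    (B : Finset ι) (a : ι → ℝ) (n : ℕ)
    (hint : ∀ x ∈ B, ∀ j ≤ n, Integrable (fun ω ↦ X x ω ^ j) μ) :
    ∫ ω, (∑ x ∈ B, a x * X x ω) ^ n ∂μ =
      ∑ d ∈ B.piAntidiag n, (Nat.multinomial B d : ℝ) *
        ∏ x ∈ B, a x ^ d x * ∫ ω, X x ω ^ d x ∂μ := by
  have hpow (d : ι → ℕ) : iIndepFun (fun x ω ↦ X x ω ^ d x) μ :=
    hX.comp _ fun x ↦ measurable_id.pow_const (d x)
  have hpowm (d : ι → ℕ) (x : ι) : AEStronglyMeasurable (fun ω ↦ X x ω ^ d x) μ :=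
    ((hXm x).pow_const _).aestronglyMeasurable
  simp_rw [sum_pow_eq_sum_piAntidiag, mul_pow, prod_mul_distrib]
  rw [integral_finsetSum]
  · refine sum_congr rfl fun d _ ↦ ?_
    rw [integral_const_mul, integral_const_mul, (hpow d).integral_finsetProd (hpowm d)]
  · intro d hd
    refine (((hpow d).integrable_finsetProd (hpowm d) fun x hx ↦ ?_).const_mul _).const_mul _
    exact hint x hx _ (le_of_mem_piAntidiag hd hx)

end ProbabilityTheory

section SupportCode

variable {ι : Type*} (B : Finset ι) (n : ℕ)

/-- Codes `d` by the size `k` of its support in `B`, an enumeration `f : Fin k → ι` of that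
support and the multiplicities `e = d ∘ f`, reduced mod `n + 1`. -/
def supportCode (d : ι → ℕ) : Σ k, (Fin k → Fin (n + 1)) × (Fin k → ι) :=
  ⟨#{x ∈ B | d x ≠ 0}, fun i ↦ Fin.ofNat (n + 1) (d ({x ∈ B | d x ≠ 0}.equivFin.symm i)),
    fun i ↦ {x ∈ B | d x ≠ 0}.equivFin.symm i⟩

def supportDecode (p : Σ k, (Fin k → Fin (n + 1)) × (Fin k → ι)) (x : ι) : ℕ :=
  ∑ i, if p.2.2 i = x then (p.2.1 i : ℕ) else 0

variable {B n}

lemma supportCode_mem_support (d : ι → ℕ) (i : Fin (supportCode B n d).1) :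
    (supportCode B n d).2.2 i ∈ B ∧ d ((supportCode B n d).2.2 i) ≠ 0 :=
  mem_filter.1 (coe_mem _)

lemma val_supportCode {d : ι → ℕ} (hd : d ∈ B.piAntidiag n) (i : Fin (supportCode B n d).1) :
    ((supportCode B n d).2.1 i : ℕ) = d ((supportCode B n d).2.2 i) :=
  Nat.mod_eq_of_lt (Nat.lt_succ_of_le (le_of_mem_piAntidiag hd (supportCode_mem_support d i).1))

@[to_additive]
lemma prod_supportCode {M : Type*} [CommMonoid M] (d : ι → ℕ) (F : ι → M) :
    ∏ i, F ((supportCode B n d).2.2 i) = ∏ x ∈ B with d x ≠ 0, F x :=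
  prod_equivFin_symm _ F

lemma supportDecode_supportCode {d : ι → ℕ} (hd : d ∈ B.piAntidiag n) :
    supportDecode n (supportCode B n d) = d := by
  ext x
  simp only [supportDecode, val_supportCode hd]
  rw [sum_supportCode d (fun y ↦ if y = x then d y else 0), sum_ite_eq']
  split_ifs with hx
  · rfl
  · by_contra h
    exact hx (mem_filter.2 ⟨(mem_piAntidiag.1 hd).2 x (Ne.symm h), Ne.symm h⟩)

lemma supportCode_mem (hn : n ≠ 0) {d : ι → ℕ} (hd : d ∈ B.piAntidiag n)
    (hd1 : ∀ x ∈ B, d x ≠ 1) :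
    supportCode B n d ∈ (Icc 1 (n / 2)).sigma fun k ↦
      (univ : Finset (Fin k → Fin (n + 1))).filter
        (fun e ↦ ∑ i, (e i : ℕ) = n ∧ ∀ i, 2 ≤ (e i : ℕ)) ×ˢ Fintype.piFinset fun _ ↦ B := by
  have hsum : ∑ i, ((supportCode B n d).2.1 i : ℕ) = n := by
    simp_rw [val_supportCode hd]
    rw [sum_supportCode d d, sum_filter_ne_zero, (mem_piAntidiag.1 hd).1]
  have htwo (i : Fin (supportCode B n d).1) : 2 ≤ ((supportCode B n d).2.1 i : ℕ) := by
    have hi := supportCode_mem_support d i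
    have := hd1 _ hi.1
    rw [val_supportCode hd]
    omega
  have hk : 2 * (supportCode B n d).1 ≤ n := by
    have := card_nsmul_le_sum univ (fun i ↦ ((supportCode B n d).2.1 i : ℕ)) 2 fun i _ ↦ htwo i
    rw [card_univ, Fintype.card_fin, smul_eq_mul, hsum] at this
    omega
  have hk0 : (supportCode B n d).1 ≠ 0 := by
    intro h0
    have : IsEmpty (Fin (supportCode B n d).1) := by rw [h0]; infer_instance
    rw [univ_eq_empty, sum_empty] at hsum
    exact hn hsum.symm
  simp only [mem_sigma, mem_Icc, mem_product, mem_filter, mem_univ, true_and,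
    Fintype.mem_piFinset]
  exact ⟨by omega, ⟨hsum, htwo⟩, fun i ↦ (supportCode_mem_support d i).1⟩

theorem sum_prod_support_le_sum_compositions (hn : n ≠ 0) (w : ι → ℕ → ℝ)
    (hw : ∀ x j, 0 ≤ w x j) :
    ∑ d ∈ B.piAntidiag n with ∀ x ∈ B, d x ≠ 1, ∏ x ∈ B with d x ≠ 0, w x (d x) ≤
      ∑ k ∈ Icc 1 (n / 2), ∑ e ∈ (univ : Finset (Fin k → Fin (n + 1))).filter
          (fun e ↦ ∑ i, (e i : ℕ) = n ∧ ∀ i, 2 ≤ (e i : ℕ)), ∏ i, ∑ x ∈ B, w x (e i) := by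
  set t : (Σ k, (Fin k → Fin (n + 1)) × (Fin k → ι)) → ℝ := fun p ↦ ∏ i, w (p.2.2 i) (p.2.1 i)
  set A := (B.piAntidiag n).filter fun d ↦ ∀ x ∈ B, d x ≠ 1
  calc _ = ∑ d ∈ A, t (supportCode B n d) := by
        refine sum_congr rfl fun d hd ↦ ?_
        simp only [t, val_supportCode (mem_filter.1 hd).1, prod_supportCode d fun x ↦ w x (d x)]
    _ = ∑ p ∈ A.image (supportCode B n), t p := by
        refine (sum_image fun d hd d' hd' h ↦ ?_).symm
        rw [← supportDecode_supportCode (mem_filter.1 hd).1,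
          ← supportDecode_supportCode (mem_filter.1 hd').1, h]
    _ ≤ ∑ p ∈ (Icc 1 (n / 2)).sigma fun k ↦ (univ : Finset (Fin k → Fin (n + 1))).filter
          (fun e ↦ ∑ i, (e i : ℕ) = n ∧ ∀ i, 2 ≤ (e i : ℕ)) ×ˢ Fintype.piFinset fun _ ↦ B, t p := by
        refine sum_le_sum_of_subset_of_nonneg (image_subset_iff.2 fun d hd ↦ ?_)
          fun p _ _ ↦ prod_nonneg fun i _ ↦ hw _ _
        exact supportCode_mem hn (mem_filter.1 hd).1 (mem_filter.1 hd).2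
    _ = _ := by
        rw [sum_sigma]
        refine sum_congr rfl fun k _ ↦ ?_
        rw [sum_product]
        exact sum_congr rfl fun e _ ↦ (prod_univ_sum (fun _ ↦ B) fun i x ↦ w x (e i)).symm

end SupportCode

section Monomials

variable {ι : Type*} {B : Finset ι} {n : ℕ}

lemma sum_piAntidiag_eq_sum_filter_ne_one (N : (ι → ℕ) → ℝ) {c : ι → ℕ → ℝ}
    (hc1 : ∀ x ∈ B, c x 1 = 0) :
    ∑ d ∈ B.piAntidiag n, N d * ∏ x ∈ B, c x (d x) =
      ∑ d ∈ B.piAntidiag n with ∀ x ∈ B, d x ≠ 1, N d * ∏ x ∈ B, c x (d x) := by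
  refine (sum_filter_of_ne fun d _ hne x hx hdx ↦ hne ?_).symm
  rw [prod_eq_zero hx (by rw [hdx, hc1 x hx]), mul_zero]

lemma multinomial_mul_prod_le {d : ι → ℕ} (hd : d ∈ B.piAntidiag n) {c w : ι → ℕ → ℝ}
    (hc0 : ∀ x ∈ B, c x 0 = 1) (hcw : ∀ x ∈ B, ∀ j, |c x j| ≤ w x j) :
    (Nat.multinomial B d : ℝ) * ∏ x ∈ B, c x (d x) ≤
      n.factorial * ∏ x ∈ B with d x ≠ 0, w x (d x) := by
  have hsupp : ∏ x ∈ B, c x (d x) = ∏ x ∈ B with d x ≠ 0, c x (d x) :=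
    (prod_filter_of_ne (p := fun x ↦ d x ≠ 0) fun x hx h hdx ↦ h (by rw [hdx, hc0 x hx])).symm
  have hprod : ∏ x ∈ B, c x (d x) ≤ ∏ x ∈ B with d x ≠ 0, w x (d x) := by
    rw [hsupp]
    refine (le_abs_self _).trans ?_
    rw [abs_prod]
    exact prod_le_prod (fun _ _ ↦ abs_nonneg _) fun x hx ↦ hcw x (mem_filter.1 hx).1 _
  have hmult : (Nat.multinomial B d : ℝ) ≤ n.factorial := by
    rw [← (mem_piAntidiag.1 hd).1]
    exact_mod_cast Nat.multinomial_le_factorial_sum B d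
  have hw : 0 ≤ ∏ x ∈ B with d x ≠ 0, w x (d x) :=
    prod_nonneg fun x hx ↦ (abs_nonneg _).trans (hcw x (mem_filter.1 hx).1 _)
  calc (Nat.multinomial B d : ℝ) * ∏ x ∈ B, c x (d x)
      ≤ Nat.multinomial B d * ∏ x ∈ B with d x ≠ 0, w x (d x) := by gcongr
    _ ≤ n.factorial * ∏ x ∈ B with d x ≠ 0, w x (d x) := by gcongr

end Monomials

/-- moment bound for weighted sums of independent centred random
variables: for every `m ≥ 1` there is `C = C(m)` such that
`E[(∑ g_x Z_x)^{2m}] ≤ C ∑_{k=1}^m ∑_{e₁+⋯+e_k=2m, eᵢ≥2} ∏ᵢ (∑_x g_x^{eᵢ} sup_y |E[Z_y^{eᵢ}]|)`. -/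
theorem moment_expansion_bound (m : ℕ) (hm : 1 ≤ m) :
    ∃ C > (0:ℝ), ∀ (Ω : Type) (_ : MeasurableSpace Ω) (P : Measure Ω),
      IsProbabilityMeasure P →
      ∀ (ι : Type) [MeasurableSpace ι] (B : Finset ι) (Z : ι → Ω → ℝ) (g : ι → ℝ),
      (∀ x, Measurable (Z x)) →
      iIndepFun Z P →
      (∀ x ∈ B, ∫ ω, Z x ω ∂P = 0) →
      (∀ x, 0 ≤ g x) →
      (∀ x ∈ B, ∀ j ≤ 2*m, Integrable (fun ω => (Z x ω)^j) P) →
      ∫ ω, (∑ x ∈ B, g x * Z x ω)^(2*m) ∂P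
        ≤ C * ∑ k ∈ Finset.Icc 1 m,
            ∑ e ∈ (Finset.univ : Finset (Fin k → Fin (2*m+1))).filter
                (fun e => (∑ i, (e i : ℕ)) = 2*m ∧ ∀ i, 2 ≤ (e i : ℕ)),
              ∏ i : Fin k,
                ∑ x ∈ B, g x ^ (e i : ℕ) * (⨆ y ∈ B, |∫ ω, (Z y ω)^((e i : ℕ)) ∂P|) := by
  refine ⟨(2 * m).factorial, by positivity, fun Ω _ P hP ι _ B Z g hZm hZ hcen hg hint ↦ ?_⟩
  set M : ℕ → ℝ := fun j ↦ ⨆ y ∈ B, |∫ ω, Z y ω ^ j ∂P|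
  have hcw (x) (hx : x ∈ B) (j : ℕ) : |g x ^ j * ∫ ω, Z x ω ^ j ∂P| ≤ g x ^ j * M j := by
    rw [abs_mul, abs_of_nonneg (pow_nonneg (hg x) j)]
    exact mul_le_mul_of_nonneg_left (le_ciSup₂_of_mem (f := fun y ↦ |∫ ω, Z y ω ^ j ∂P|) hx)
      (pow_nonneg (hg x) j)
  have hw (x) (j : ℕ) : 0 ≤ g x ^ j * M j :=
    mul_nonneg (pow_nonneg (hg x) j)
      (Real.iSup_nonneg fun _ ↦ Real.iSup_nonneg fun _ ↦ abs_nonneg _)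
  have hcompositions := sum_prod_support_le_sum_compositions (B := B) (n := 2 * m) (by omega)
    (fun x j ↦ g x ^ j * M j) hw
  rw [show 2 * m / 2 = m by omega] at hcompositions
  calc ∫ ω, (∑ x ∈ B, g x * Z x ω) ^ (2 * m) ∂P
      = ∑ d ∈ B.piAntidiag (2 * m), (Nat.multinomial B d : ℝ) *
          ∏ x ∈ B, g x ^ d x * ∫ ω, Z x ω ^ d x ∂P := hZ.integral_sum_mul_pow hZm B g _ hint
    _ = ∑ d ∈ B.piAntidiag (2 * m) with ∀ x ∈ B, d x ≠ 1, (Nat.multinomial B d : ℝ) *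
          ∏ x ∈ B, g x ^ d x * ∫ ω, Z x ω ^ d x ∂P :=
        sum_piAntidiag_eq_sum_filter_ne_one (c := fun x j ↦ g x ^ j * ∫ ω, Z x ω ^ j ∂P) _
          fun x hx ↦ by simp only [pow_one, hcen x hx, mul_zero]
    _ ≤ ∑ d ∈ B.piAntidiag (2 * m) with ∀ x ∈ B, d x ≠ 1,
          ((2 * m).factorial : ℝ) * ∏ x ∈ B with d x ≠ 0, g x ^ d x * M (d x) :=
        sum_le_sum fun d hd ↦ multinomial_mul_prod_le (mem_filter.1 hd).1 (by simp) hcw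
    _ ≤ _ := by
        rw [← mul_sum]
        exact mul_le_mul_of_nonneg_left hcompositions (by positivity)
end
end

section
/- Assume d = 1 and that the environment satisfies: at most n/4 of the sites k \in \{-n-1,\dots,0\} have \tau_k > M, and at most n/4 of the sites k \in \{0,\dots,n+1\} have \tau_k > M, for some M > 0. Then \lambda_n \le 32 M^{2a} / (n \sum_{|x| \le n/4} \tau_x). -/
open Classical

noncomputable section

/-- One-dimensional Dirichlet form `ℰ(f,f) = ∑_k τ_k^a τ_{k+1}^a (f(k+1)-f(k))²`. -/
def dirForm1 (a : ℝ) (τ : ℤ → ℝ) (f : ℤ → ℝ) : ℝ :=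
  ∑ᶠ k : ℤ, τ k ^ a * τ (k+1) ^ a * (f (k+1) - f k)^2

/-- Principal Dirichlet eigenvalue on `{-n,…,n} ⊆ ℤ`. -/
def eig1 (a : ℝ) (τ : ℤ → ℝ) (n : ℕ) : ℝ :=
  sInf {r | ∃ f : ℤ → ℝ,
    (∀ k : ℤ, (n : ℤ) < |k| → f k = 0) ∧ f ≠ 0 ∧
    r = dirForm1 a τ f / ∑ᶠ k : ℤ, f k ^ 2 * τ k}

/-!
Test function: starting from `0` at `-n-1`, climb by `1/n` across every edge whose two endpoints
have `τ ≤ M` and stay flat across the others; do the same from the right end `n+1` and take the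
minimum of the two. It vanishes outside `B_n`, so each of the `2n+2` edges of the box contributes
at most `M^{2a}/n²` to `ℰ`. At most `n/4` bad sites on each half give at most `n/2` bad edges
there, so the function is at least `(n/4+1)/n` on `|k| ≤ n/4`, and the Rayleigh quotient is at
most `32 (n+1) M^{2a} / ((n+4)² ∑ τ) ≤ 32 M^{2a} / (n ∑ τ)`.
-/

open Finset

section Counting

variable {p : ℤ → Prop} [DecidablePred p]

lemma card_filter_Ico_le_succ_right (a k : ℤ) :
    #((Ico a k).filter p) ≤ #((Ico a (k + 1)).filter p) :=
  card_le_card (filter_subset_filter _ (Ico_subset_Ico_right (by omega)))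

lemma card_filter_Ico_succ_right_le (a k : ℤ) :
    #((Ico a (k + 1)).filter p) ≤ #((Ico a k).filter p) + if p k then 1 else 0 := by
  have hsub : Ico a (k + 1) ⊆ insert k (Ico a k) := by
    intro x; simp only [mem_Ico, mem_insert]; omega
  refine (card_le_card (filter_subset_filter _ hsub)).trans ?_
  rw [filter_insert]
  split_ifs
  · exact card_insert_le _ _
  · simp

lemma card_filter_Ico_succ_left_le (k b : ℤ) :
    #((Ico (k + 1) b).filter p) ≤ #((Ico k b).filter p) :=
  card_le_card (filter_subset_filter _ (Ico_subset_Ico_left (by omega)))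

lemma card_filter_Ico_le_succ_left (k b : ℤ) :
    #((Ico k b).filter p) ≤ #((Ico (k + 1) b).filter p) + if p k then 1 else 0 := by
  have hsub : Ico k b ⊆ insert k (Ico (k + 1) b) := by
    intro x; simp only [mem_Ico, mem_insert]; omega
  refine (card_le_card (filter_subset_filter _ hsub)).trans ?_
  rw [filter_insert]
  split_ifs
  · exact card_insert_le _ _
  · simp

end Counting

section TentFunction

variable (q : ℤ → Prop)

/-- The edge `{j, j+1}` is indexed by `j`. -/
def goodEdge (j : ℤ) : Prop := ¬ q j ∧ ¬ q (j + 1)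

lemma card_filter_not_goodEdge_le [DecidablePred q] {s t : Finset ℤ}
    (hst : ∀ j ∈ s, j ∈ t ∧ j + 1 ∈ t) :
    #(s.filter (fun j => ¬ goodEdge q j)) ≤ 2 * #(t.filter q) := by
  have hsub : s.filter (fun j => ¬ goodEdge q j) ⊆ t.filter q ∪ (t.filter q).image (· - 1) := by
    intro j hj
    obtain ⟨hjs, hbad⟩ := mem_filter.1 hj
    obtain ⟨hjt, hj1t⟩ := hst j hjs
    rcases not_and_or.1 hbad with h | h
    · exact mem_union_left _ (mem_filter.2 ⟨hjt, not_not.1 h⟩)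
    · exact mem_union_right _ (mem_image.2 ⟨j + 1, mem_filter.2 ⟨hj1t, not_not.1 h⟩, by ring⟩)
  calc #(s.filter (fun j => ¬ goodEdge q j))
      ≤ #(t.filter q ∪ (t.filter q).image (· - 1)) := card_le_card hsub
    _ ≤ #(t.filter q) + #((t.filter q).image (· - 1)) := card_union_le _ _
    _ ≤ 2 * #(t.filter q) := by have := card_image_le (s := t.filter q) (f := (· - 1)); omega

lemma sub_sub_two_mul_le_card_goodEdge [DecidablePred q] (a b : ℤ) :
    b - a - 2 * #((Icc a b).filter q) ≤ #((Ico a b).filter (goodEdge q)) := by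
  have hsplit := card_filter_add_card_filter_not (s := Ico a b) (p := goodEdge q)
  have hbad := card_filter_not_goodEdge_le q (s := Ico a b) (t := Icc a b) (by
    intro j hj; simp only [mem_Ico, mem_Icc] at hj ⊢; omega)
  have hcard := Int.card_Ico a b
  omega

variable (n : ℕ)

def goodLeft (k : ℤ) : ℕ := #((Ico (-(n : ℤ) - 1) k).filter (goodEdge q))

def goodRight (k : ℤ) : ℕ := #((Ico k ((n : ℤ) + 1)).filter (goodEdge q))

def tent (k : ℤ) : ℕ := min (goodLeft q n k) (goodRight q n k)

variable {q n}

lemma tent_eq_zero {k : ℤ} (hk : (n : ℤ) < |k|) : tent q n k = 0 := by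
  rcases lt_abs.1 hk with hk | hk
  · have : goodRight q n k = 0 := by
      rw [goodRight, Ico_eq_empty_of_le (by omega), filter_empty, card_empty]
    simp [tent, this]
  · have : goodLeft q n k = 0 := by
      rw [goodLeft, Ico_eq_empty_of_le (by omega), filter_empty, card_empty]
    simp [tent, this]

lemma tent_succ_le_and_le (k : ℤ) :
    tent q n (k + 1) ≤ tent q n k + (if goodEdge q k then 1 else 0) ∧
      tent q n k ≤ tent q n (k + 1) + (if goodEdge q k then 1 else 0) := by
  have h₁ := card_filter_Ico_le_succ_right (p := goodEdge q) (-(n : ℤ) - 1) k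
  have h₂ := card_filter_Ico_succ_right_le (p := goodEdge q) (-(n : ℤ) - 1) k
  have h₃ := card_filter_Ico_succ_left_le (p := goodEdge q) k ((n : ℤ) + 1)
  have h₄ := card_filter_Ico_le_succ_left (p := goodEdge q) k ((n : ℤ) + 1)
  simp only [tent, goodLeft, goodRight]
  split_ifs at h₂ h₄ ⊢ <;> omega

lemma tent_succ_of_not_goodEdge {k : ℤ} (hk : ¬ goodEdge q k) :
    tent q n (k + 1) = tent q n k := by
  have := tent_succ_le_and_le (q := q) (n := n) k
  simp only [hk, if_false] at this
  omega

lemma abs_tent_succ_sub_le (k : ℤ) : |(tent q n (k + 1) : ℝ) - tent q n k| ≤ 1 := by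
  obtain ⟨h₁, h₂⟩ := tent_succ_le_and_le (q := q) (n := n) k
  have h₁' : (tent q n (k + 1) : ℝ) ≤ tent q n k + 1 := by
    exact_mod_cast h₁.trans (by split_ifs <;> omega)
  have h₂' : (tent q n k : ℝ) ≤ tent q n (k + 1) + 1 := by
    exact_mod_cast h₂.trans (by split_ifs <;> omega)
  rw [abs_le]
  constructor <;> linarith

lemma goodLeft_ge [DecidablePred q] (hbad : (#((Icc (-(n : ℤ) - 1) 0).filter q) : ℝ) ≤ n / 4)
    {k : ℤ} (hk : -((n : ℝ) / 4) ≤ k) : (n : ℝ) / 4 + 1 ≤ goodLeft q n k := by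
  set k₀ := min k 0
  have hcount := (Int.cast_le (R := ℝ)).2 (sub_sub_two_mul_le_card_goodEdge q (-(n : ℤ) - 1) k₀)
  have hsites : #((Icc (-(n : ℤ) - 1) k₀).filter q) ≤ #((Icc (-(n : ℤ) - 1) 0).filter q) :=
    card_le_card (filter_subset_filter _ (Icc_subset_Icc_right (min_le_right _ _)))
  have hedges : #((Ico (-(n : ℤ) - 1) k₀).filter (goodEdge q)) ≤ goodLeft q n k :=
    card_le_card (filter_subset_filter _ (Ico_subset_Ico_right (min_le_left _ _)))
  have hk₀ : -((n : ℝ) / 4) ≤ k₀ := by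
    simp only [k₀, Int.cast_min, Int.cast_zero]; exact le_min hk (by linarith [n.cast_nonneg (α := ℝ)])
  push_cast at hcount
  have := (Nat.cast_le (α := ℝ)).2 hsites
  have := (Nat.cast_le (α := ℝ)).2 hedges
  linarith

lemma goodRight_ge [DecidablePred q] (hbad : (#((Icc 0 ((n : ℤ) + 1)).filter q) : ℝ) ≤ n / 4)
    {k : ℤ} (hk : (k : ℝ) ≤ n / 4) : (n : ℝ) / 4 + 1 ≤ goodRight q n k := by
  set k₀ := max k 0
  have hcount := (Int.cast_le (R := ℝ)).2 (sub_sub_two_mul_le_card_goodEdge q k₀ ((n : ℤ) + 1))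
  have hsites : #((Icc k₀ ((n : ℤ) + 1)).filter q) ≤ #((Icc 0 ((n : ℤ) + 1)).filter q) :=
    card_le_card (filter_subset_filter _ (Icc_subset_Icc_left (le_max_right _ _)))
  have hedges : #((Ico k₀ ((n : ℤ) + 1)).filter (goodEdge q)) ≤ goodRight q n k :=
    card_le_card (filter_subset_filter _ (Ico_subset_Ico_left (le_max_left _ _)))
  have hk₀ : (k₀ : ℝ) ≤ n / 4 := by
    simp only [k₀, Int.cast_max, Int.cast_zero]; exact max_le hk (by positivity)
  push_cast at hcount
  have := (Nat.cast_le (α := ℝ)).2 hsites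
  have := (Nat.cast_le (α := ℝ)).2 hedges
  linarith

lemma tent_ge [DecidablePred q] (hleft : (#((Icc (-(n : ℤ) - 1) 0).filter q) : ℝ) ≤ n / 4)
    (hright : (#((Icc 0 ((n : ℤ) + 1)).filter q) : ℝ) ≤ n / 4)
    {k : ℤ} (hk : ((|k| : ℤ) : ℝ) ≤ n / 4) : (n : ℝ) / 4 + 1 ≤ tent q n k := by
  rw [Int.cast_abs, abs_le] at hk
  rw [tent, Nat.cast_min]
  exact le_min (goodLeft_ge hleft hk.1) (goodRight_ge hright hk.2)

end TentFunction

section Eigenvalue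

variable {a : ℝ} {τ : ℤ → ℝ} {n : ℕ} {f : ℤ → ℝ}

lemma dirForm1_eq_sum (hf : ∀ k : ℤ, (n : ℤ) < |k| → f k = 0) :
    dirForm1 a τ f =
      ∑ k ∈ Icc (-(n : ℤ) - 1) n, τ k ^ a * τ (k + 1) ^ a * (f (k + 1) - f k) ^ 2 := by
  refine finsum_eq_sum_of_support_subset _ fun k hk => ?_
  rw [coe_Icc, Set.mem_Icc]
  by_contra hout
  apply hk
  dsimp only
  rw [hf k (by rw [lt_abs]; omega), hf (k + 1) (by rw [lt_abs]; omega)]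
  ring

lemma finsum_sq_mul_eq_sum (hf : ∀ k : ℤ, (n : ℤ) < |k| → f k = 0) :
    ∑ᶠ k, f k ^ 2 * τ k = ∑ k ∈ Icc (-(n : ℤ)) n, f k ^ 2 * τ k := by
  refine finsum_eq_sum_of_support_subset _ fun k hk => ?_
  rw [coe_Icc, Set.mem_Icc]
  by_contra hout
  apply hk
  dsimp only
  rw [hf k (by rw [lt_abs]; omega)]
  ring

lemma eig1_le_div (hτ : ∀ k, 0 ≤ τ k) (hf : ∀ k : ℤ, (n : ℤ) < |k| → f k = 0) (hf₀ : f ≠ 0) :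
    eig1 a τ n ≤ dirForm1 a τ f / ∑ᶠ k, f k ^ 2 * τ k := by
  refine csInf_le ⟨0, ?_⟩ ⟨f, hf, hf₀, rfl⟩
  rintro r ⟨g, -, -, rfl⟩
  refine div_nonneg (finsum_nonneg fun k => ?_) (finsum_nonneg fun k => ?_)
  · exact mul_nonneg (mul_nonneg (Real.rpow_nonneg (hτ k) a) (Real.rpow_nonneg (hτ _) a))
      (sq_nonneg _)
  · exact mul_nonneg (sq_nonneg _) (hτ k)

lemma mul_sum_le_finsum_sq_mul (hτ : ∀ k, 0 ≤ τ k) (hf : ∀ k : ℤ, (n : ℤ) < |k| → f k = 0)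
    {T : Finset ℤ} (hT : T ⊆ Icc (-(n : ℤ)) n) {c : ℝ} (hc : 0 ≤ c) (hcf : ∀ k ∈ T, c ≤ f k) :
    c ^ 2 * ∑ k ∈ T, τ k ≤ ∑ᶠ k, f k ^ 2 * τ k := by
  rw [finsum_sq_mul_eq_sum hf, mul_sum]
  calc ∑ k ∈ T, c ^ 2 * τ k ≤ ∑ k ∈ T, f k ^ 2 * τ k :=
        sum_le_sum fun k hk => mul_le_mul_of_nonneg_right (pow_le_pow_left₀ hc (hcf k hk) 2) (hτ k)
    _ ≤ _ := sum_le_sum_of_subset_of_nonneg hT fun k _ _ => mul_nonneg (sq_nonneg _) (hτ k)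

variable {M : ℝ}

lemma edge_term_tent_le (ha : 0 ≤ a) (hτ : ∀ k, 0 ≤ τ k) (hM : 0 < M) (k : ℤ) :
    τ k ^ a * τ (k + 1) ^ a *
        ((tent (M < τ ·) n (k + 1) : ℝ) / n - tent (M < τ ·) n k / n) ^ 2 ≤
      M ^ (2 * a) / n ^ 2 := by
  by_cases hk : goodEdge (M < τ ·) k
  · have h₁ : τ k ^ a ≤ M ^ a := Real.rpow_le_rpow (hτ k) (not_lt.1 hk.1) ha
    have h₂ : τ (k + 1) ^ a ≤ M ^ a := Real.rpow_le_rpow (hτ _) (not_lt.1 hk.2) ha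
    have h₃ : ((tent (M < τ ·) n (k + 1) : ℝ) / n - tent (M < τ ·) n k / n) ^ 2 ≤ 1 / n ^ 2 := by
      rw [← sub_div, div_pow]
      exact div_le_div_of_nonneg_right
        ((sq_le_one_iff_abs_le_one _).2 (abs_tent_succ_sub_le k)) (sq_nonneg _)
    calc _ ≤ M ^ a * M ^ a * (1 / n ^ 2) :=
          mul_le_mul (mul_le_mul h₁ h₂ (Real.rpow_nonneg (hτ _) a) (Real.rpow_nonneg hM.le a))
            h₃ (sq_nonneg _) (by positivity)
      _ = M ^ (2 * a) / n ^ 2 := by rw [← Real.rpow_add hM, ← two_mul]; ring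
  · rw [tent_succ_of_not_goodEdge hk, sub_self, zero_pow two_ne_zero, mul_zero]
    positivity

lemma dirForm1_tent_le (ha : 0 ≤ a) (hτ : ∀ k, 0 ≤ τ k) (hM : 0 < M) :
    dirForm1 a τ (fun k => (tent (M < τ ·) n k : ℝ) / n) ≤ (2 * n + 2) * (M ^ (2 * a) / n ^ 2) := by
  have hcard : #(Icc (-(n : ℤ) - 1) n) = 2 * n + 2 := by rw [Int.card_Icc]; omega
  rw [dirForm1_eq_sum fun k hk => by rw [tent_eq_zero hk, Nat.cast_zero, zero_div]]
  calc _ ≤ ∑ _k ∈ Icc (-(n : ℤ) - 1) n, M ^ (2 * a) / n ^ 2 :=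
        sum_le_sum fun k _ => edge_term_tent_le ha hτ hM k
    _ = _ := by rw [sum_const, hcard, nsmul_eq_mul]; push_cast; ring

end Eigenvalue

/-- in dimension one, if at most `n/4` sites of `{-n-1,…,0}` and
at most `n/4` sites of `{0,…,n+1}` have `τ_k > M`, then
`λ_n ≤ 32 M^{2a} / (n ∑_{|x| ≤ n/4} τ_x)`. -/
theorem eig1_upper_bound (a : ℝ) (ha : a ∈ Set.Icc (0:ℝ) 1)
    (τ : ℤ → ℝ) (hτ : ∀ k, 1 ≤ τ k) (M : ℝ) (hM : 0 < M)
    (n : ℕ) (hn : 1 ≤ n)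
    (hleft : (((Finset.Icc (-(n:ℤ)-1) 0).filter (fun k => M < τ k)).card : ℝ)
        ≤ (n : ℝ)/4)
    (hright : (((Finset.Icc (0:ℤ) ((n:ℤ)+1)).filter (fun k => M < τ k)).card : ℝ)
        ≤ (n : ℝ)/4) :
    eig1 a τ n ≤ 32 * M ^ (2*a)
      / ((n : ℝ) * ∑ k ∈ (Finset.Icc (-(n:ℤ)) (n:ℤ)).filter
          (fun k => ((|k| : ℤ) : ℝ) ≤ (n:ℝ)/4), τ k) := by
  set T := (Icc (-(n : ℤ)) n).filter (fun k => ((|k| : ℤ) : ℝ) ≤ (n : ℝ) / 4)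
  set f : ℤ → ℝ := fun k => (tent (M < τ ·) n k : ℝ) / n
  set c : ℝ := ((n : ℝ) / 4 + 1) / n
  have hτ₀ : ∀ k, 0 ≤ τ k := fun k => zero_le_one.trans (hτ k)
  have hn₀ : (0 : ℝ) < n := by exact_mod_cast hn
  have hf : ∀ k : ℤ, (n : ℤ) < |k| → f k = 0 := fun k hk => by
    simp only [f]; rw [tent_eq_zero hk, Nat.cast_zero, zero_div]
  have hcf : ∀ k ∈ T, c ≤ f k := fun k hk =>
    div_le_div_of_nonneg_right (tent_ge hleft hright (mem_filter.1 hk).2) hn₀.le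
  have h0T : (0 : ℤ) ∈ T := mem_filter.2 ⟨by simp, by simp; positivity⟩
  have hf₀ : f ≠ 0 := fun h => by
    have := hcf 0 h0T
    simp only [h, Pi.zero_apply] at this
    linarith [show 0 < c by positivity]
  have hS : 0 < ∑ k ∈ T, τ k :=
    (zero_lt_one.trans_le (hτ 0)).trans_le (single_le_sum (fun k _ => hτ₀ k) h0T)
  calc eig1 a τ n ≤ dirForm1 a τ f / ∑ᶠ k, f k ^ 2 * τ k := eig1_le_div hτ₀ hf hf₀
    _ ≤ (2 * n + 2) * (M ^ (2 * a) / n ^ 2) / (c ^ 2 * ∑ k ∈ T, τ k) :=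
        div_le_div₀ (by positivity) (dirForm1_tent_le ha.1 hτ₀ hM) (by positivity)
          (mul_sum_le_finsum_sq_mul hτ₀ hf (filter_subset _ _) (by positivity) hcf)
    _ ≤ 32 * M ^ (2 * a) / (n * ∑ k ∈ T, τ k) := by
        rw [div_le_div_iff₀ (by positivity) (by positivity)]
        have hP : 0 < M ^ (2 * a) := Real.rpow_pos_of_pos hM _
        simp only [c]
        field_simp
        nlinarith [mul_pos hP hS]
end
end
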